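/- arXiv:2312.09724 — 2 statements merged into one kernel-verified Lean document; each statement's English description precedes it below -/
import Mathlib

section
/- Let 1 ≤ p1 ≤ p2 ≤ 2 or 2 ≤ p1 ≤ p2 ≤ ∞, with (p1,p2) ≠ (1,∞). Let α > 0 and β ≥ 0, and let D_σ : ℓ_{p1} → ℓ_{p2} be the diagonal operator generated by the sequence σ_k = k^{−α}(log k)^β for k ≥ 2^{β/α} and σ_k = 1 otherwise. Then there exist constants c1, c2 > 0 such that for all integers k > 1, c1 · k^{−α}(log k)^β ≤ a_k(D_σ : ℓ_{p1} → ℓ_{p2}) ≤ c2 · k^{−α}(log k)^β. -/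
/-!
Upper bound: cutting `D` off after its first `k - 1` coordinates leaves an operator of rank
`< k` at distance `sup_{m ≥ k} |σ_m|` from `D`, because `ℓ_{p₁}` embeds contractively into
`ℓ_{p₂}`.

Lower bound: for `A` of rank `< k`, the leading `2k × 2k` block of `D - A` is
`diag(σ_1, …, σ_{2k})` minus a matrix of rank `< k`, so its squared Frobenius norm is at least
`(k + 1) min_{m ≤ 2k} |σ_m|²`. When `p₂ ≤ 2` every column, and when `p₁ ≥ 2` every row, of
that block has `ℓ₂`-norm at most `‖D - A‖`, so the squared Frobenius norm is also at most
`2k ‖D - A‖²`.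

Both bounds are turned into `k^{-α} (log k)^β` because this function is quasi-decreasing on
`[2, ∞)` and loses at most a factor `2^{-α}` between `x` and `2x`.
-/

open scoped ENNReal NNReal

/-- The `k`-th approximation number of a bounded linear operator `T : X → Y`:
`a_k(T) = inf { ‖T - A‖ : A : X → Y bounded linear, rank A < k }`. -/
noncomputable def approxNumber {X Y : Type*} [NormedAddCommGroup X] [NormedSpace ℂ X]
    [NormedAddCommGroup Y] [NormedSpace ℂ Y] (k : ℕ) (T : X →L[ℂ] Y) : ℝ :=
  sInf {c : ℝ | ∃ A : X →L[ℂ] Y,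
    Module.rank ℂ (LinearMap.range (A : X →ₗ[ℂ] Y)) < (k : Cardinal) ∧ c = ‖T - A‖}

/-- The sequence `σ_k = k^{-α} (log₂ k)^β` for `k ≥ 2^{β/α}`, and `σ_k = 1` otherwise. -/
noncomputable def diagSeq (α β : ℝ) (k : ℕ) : ℝ :=
  if (2 : ℝ) ^ (β / α) ≤ (k : ℝ) then (k : ℝ) ^ (-α) * Real.logb 2 k ^ β else 1

open Module Real
open scoped ComplexConjugate

namespace lp

variable {ι : Type*} {E F : ι → Type*} [∀ i, NormedAddCommGroup (E i)]
  [∀ i, NormedAddCommGroup (F i)]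

theorem norm_le_mul_norm_of_exponent_le {p q : ℝ≥0∞} (hp : p ≠ 0) (hpq : p ≤ q) {x : lp E p}
    {u : lp F q} {t : ℝ} (ht : 0 ≤ t) (h : ∀ i, ‖u i‖ ≤ t * ‖x i‖) : ‖u‖ ≤ t * ‖x‖ := by
  have hx : ∀ i, ‖x i‖ ≤ ‖x‖ := norm_apply_le_norm hp x
  rcases eq_or_ne q ∞ with rfl | hq
  · exact norm_le_of_forall_le (mul_nonneg ht (norm_nonneg' x)) fun i =>
      (h i).trans (by gcongr; exact hx i)
  have hp' : 0 < p.toReal := ENNReal.toReal_pos hp (ne_top_of_le_ne_top hq hpq)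
  have hpq' : p.toReal ≤ q.toReal := ENNReal.toReal_mono hq hpq
  have hq' : q.toReal ≠ 0 := by linarith
  -- a coordinate of modulus at most `‖x‖` has `‖x i‖ ^ q ≤ ‖x‖ ^ (q - p) * ‖x i‖ ^ p`
  refine norm_le_of_forall_sum_le (by linarith) (mul_nonneg ht (norm_nonneg' x)) fun s => ?_
  calc ∑ i ∈ s, ‖u i‖ ^ q.toReal
      ≤ ∑ i ∈ s, t ^ q.toReal * ‖x‖ ^ (q.toReal - p.toReal) * ‖x i‖ ^ p.toReal := by
        gcongr with i
        calc ‖u i‖ ^ q.toReal ≤ (t * ‖x i‖) ^ q.toReal := by gcongr; exact h i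
          _ = t ^ q.toReal * (‖x i‖ ^ (q.toReal - p.toReal) * ‖x i‖ ^ p.toReal) := by
            rw [mul_rpow ht (norm_nonneg _), ← rpow_add' (norm_nonneg _) (by simpa using hq'),
              sub_add_cancel]
          _ ≤ _ := by
            rw [← mul_assoc]; gcongr
            exact hx i
    _ = t ^ q.toReal * ‖x‖ ^ (q.toReal - p.toReal) * ∑ i ∈ s, ‖x i‖ ^ p.toReal :=
        (Finset.mul_sum ..).symm
    _ ≤ t ^ q.toReal * ‖x‖ ^ (q.toReal - p.toReal) * ‖x‖ ^ p.toReal :=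
        mul_le_mul_of_nonneg_left (sum_rpow_le_norm_rpow hp' x s)
          (mul_nonneg (rpow_nonneg ht _) (rpow_nonneg (norm_nonneg' x) _))
    _ = (t * ‖x‖) ^ q.toReal := by
        rw [mul_assoc, ← rpow_add' (norm_nonneg' x) (by simpa using hq'), sub_add_cancel,
          mul_rpow ht (norm_nonneg' x)]

variable [DecidableEq ι]

theorem coeFn_sum_single (p : ℝ≥0∞) (f : ∀ i, E i) (s : Finset ι) :
    ⇑(∑ i ∈ s, lp.single p i (f i)) = fun j => if j ∈ s then f j else 0 := by
  ext j
  simp only [lp.coeFn_single, coeFn_sum, Finset.sum_apply, Finset.sum_pi_single]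

theorem norm_sum_single_two_sq (f : ∀ i, E i) (s : Finset ι) :
    ‖∑ i ∈ s, lp.single 2 i (f i)‖ ^ 2 = ∑ i ∈ s, ‖f i‖ ^ 2 := by
  simpa only [ENNReal.toReal_ofNat, rpow_two] using lp.norm_sum_single (p := 2) (by norm_num) f s

theorem sum_norm_sq_le_norm_sq {q : ℝ≥0∞} (hq0 : q ≠ 0) (hq : q ≤ 2) (w : lp E q)
    (s : Finset ι) : ∑ i ∈ s, ‖w i‖ ^ 2 ≤ ‖w‖ ^ 2 := by
  rw [← norm_sum_single_two_sq]
  have : ‖∑ i ∈ s, lp.single 2 i (w i)‖ ≤ 1 * ‖w‖ :=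
    norm_le_mul_norm_of_exponent_le hq0 hq zero_le_one fun j => by
      rw [coeFn_sum_single]; dsimp only; split_ifs <;> simp
  exact pow_le_pow_left₀ (norm_nonneg _) (by simpa using this) 2

theorem norm_sum_single_sq_le {p : ℝ≥0∞} (hp : 2 ≤ p) (f : ∀ i, E i) (s : Finset ι) :
    ‖∑ i ∈ s, lp.single p i (f i)‖ ^ 2 ≤ ∑ i ∈ s, ‖f i‖ ^ 2 := by
  rw [← norm_sum_single_two_sq]
  have : ‖∑ i ∈ s, lp.single p i (f i)‖ ≤ 1 * ‖∑ i ∈ s, lp.single 2 i (f i)‖ :=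
    norm_le_mul_norm_of_exponent_le two_ne_zero hp zero_le_one fun j => by
      rw [coeFn_sum_single, coeFn_sum_single]; simp
  exact pow_le_pow_left₀ (norm_nonneg' _) (by simpa using this) 2

end lp

theorem OrthonormalBasis.card_sub_finrank_mul_le_sum_norm_sq {𝕜 E ι : Type*} [RCLike 𝕜]
    [NormedAddCommGroup E] [InnerProductSpace 𝕜 E] [FiniteDimensional 𝕜 E] [Fintype ι]
    (e : OrthonormalBasis ι 𝕜 E) (d : ι → 𝕜) {c : ℝ} (hd : ∀ j, c ≤ ‖d j‖ ^ 2)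
    (W : Submodule 𝕜 E) (b : ι → E) (hb : ∀ j, b j ∈ W) :
    (Fintype.card ι - finrank 𝕜 W : ℝ) * c ≤ ∑ j, ‖d j • e j - b j‖ ^ 2 := by
  set u := stdOrthonormalBasis 𝕜 Wᗮ
  have hu : Orthonormal 𝕜 fun l => (u l : E) := u.orthonormal.comp_linearIsometry Wᗮ.subtypeₗᵢ
  have hdim : (Fintype.card ι - finrank 𝕜 W : ℝ) = finrank 𝕜 Wᗮ := by
    have := W.finrank_add_finrank_orthogonal
    rw [finrank_eq_card_basis e.toBasis] at this
    rw [← this]; push_cast; ring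
  have hinner : ∀ l j, inner 𝕜 (u l : E) (d j • e j - b j) = d j * inner 𝕜 (u l : E) (e j) := by
    intro l j
    rw [inner_sub_right, inner_smul_right,
      Submodule.inner_left_of_mem_orthogonal (hb j) (u l).2, sub_zero]
  -- Parseval for `e` gives each `u l` unit weight; Bessel for `u` bounds the columns
  calc (Fintype.card ι - finrank 𝕜 W : ℝ) * c
      = ∑ l, ∑ j, c * ‖inner 𝕜 (u l : E) (e j)‖ ^ 2 := by
        simp_rw [← Finset.mul_sum, e.sum_sq_norm_inner_left, hdim]
        simp [hu.1, mul_comm]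
    _ ≤ ∑ l, ∑ j, ‖d j‖ ^ 2 * ‖inner 𝕜 (u l : E) (e j)‖ ^ 2 := by
        gcongr with l _ j; exact hd j
    _ = ∑ j, ∑ l, ‖inner 𝕜 (u l : E) (d j • e j - b j)‖ ^ 2 := by
        rw [Finset.sum_comm]; simp_rw [hinner, norm_mul, mul_pow]
    _ ≤ ∑ j, ‖d j • e j - b j‖ ^ 2 := by
        gcongr with j; exact hu.sum_inner_products_le _

theorem Matrix.card_sub_rank_mul_le_sum_norm_sq {𝕜 ι : Type*} [RCLike 𝕜] [Fintype ι]
    [DecidableEq ι] (d : ι → 𝕜) {c : ℝ} (hd : ∀ j, c ≤ ‖d j‖ ^ 2) (B : Matrix ι ι 𝕜) :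
    (Fintype.card ι - B.rank : ℝ) * c ≤ ∑ i, ∑ j, ‖(Matrix.diagonal d - B) i j‖ ^ 2 := by
  set L := (WithLp.linearEquiv 2 𝕜 (ι → 𝕜)).symm
  have h := (EuclideanSpace.basisFun ι 𝕜).card_sub_finrank_mul_le_sum_norm_sq d hd
    ((Submodule.span 𝕜 (Set.range B.col)).map (L : (ι → 𝕜) →ₗ[𝕜] EuclideanSpace 𝕜 ι))
    (fun j => L (B.col j)) fun j => Submodule.mem_map_of_mem (Submodule.subset_span ⟨j, rfl⟩)
  rw [LinearEquiv.finrank_map_eq, ← Matrix.rank_eq_finrank_span_cols] at h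
  refine h.trans_eq ?_
  rw [Finset.sum_comm]
  refine Finset.sum_congr rfl fun j _ => ?_
  rw [EuclideanSpace.norm_sq_eq]
  refine Finset.sum_congr rfl fun i _ => ?_
  rcases eq_or_ne i j with rfl | h <;> simp [L, *]

section ApproxNumber

variable {X Y : Type*} [NormedAddCommGroup X] [NormedSpace ℂ X] [NormedAddCommGroup Y]
  [NormedSpace ℂ Y] {k : ℕ} {T : X →L[ℂ] Y}

theorem approxNumber_le_norm_sub (A : X →L[ℂ] Y)
    (hA : Module.rank ℂ (LinearMap.range (A : X →ₗ[ℂ] Y)) < k) : approxNumber k T ≤ ‖T - A‖ :=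
  csInf_le ⟨0, by rintro _ ⟨B, -, rfl⟩; exact norm_nonneg _⟩ ⟨A, hA, rfl⟩

theorem le_approxNumber (hk : k ≠ 0) {c : ℝ}
    (h : ∀ A : X →L[ℂ] Y, Module.rank ℂ (LinearMap.range (A : X →ₗ[ℂ] Y)) < k → c ≤ ‖T - A‖) :
    c ≤ approxNumber k T := by
  refine le_csInf ⟨_, 0, ?_, rfl⟩ fun _ ⟨A, hA, hc⟩ => hc ▸ h A hA
  simpa [LinearMap.range_zero] using Nat.pos_of_ne_zero hk

end ApproxNumber

section DiagonalOperator

local notation "ℓ[" p "]" => lp (fun _ : ℕ => ℂ) p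

variable {p q : ℝ≥0∞} [Fact (1 ≤ p)] [Fact (1 ≤ q)]

variable (p) in
noncomputable def truncation (n : ℕ) : ℓ[p] →L[ℂ] ℓ[p] :=
  ∑ j ∈ Finset.range n, (lp.evalCLM ℂ _ p j).smulRight (lp.single p j 1)

theorem truncation_apply (n : ℕ) (x : ℓ[p]) :
    truncation p n x = ∑ j ∈ Finset.range n, lp.single p j (x j) := by
  rw [truncation, _root_.sum_apply]
  refine Finset.sum_congr rfl fun j _ => ?_
  rw [ContinuousLinearMap.smulRight_apply, ← lp.single_smul, smul_eq_mul, mul_one]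
  rfl

variable (p) in
theorem rank_range_truncation_le (n : ℕ) :
    Module.rank ℂ (LinearMap.range (truncation p n : ℓ[p] →ₗ[ℂ] ℓ[p])) ≤ n := by
  classical
  have hle : LinearMap.range (truncation p n : ℓ[p] →ₗ[ℂ] ℓ[p]) ≤
      Submodule.span ℂ ((Finset.range n).image fun j => (lp.single p j 1 : ℓ[p]) : Set ℓ[p]) := by
    rintro _ ⟨x, rfl⟩
    rw [ContinuousLinearMap.coe_coe, truncation_apply]
    refine Submodule.sum_mem _ fun j hj => ?_
    rw [← mul_one (x j), ← smul_eq_mul, lp.single_smul]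
    exact Submodule.smul_mem _ _
      (Submodule.subset_span (Finset.mem_coe.2 (Finset.mem_image_of_mem _ hj)))
  calc _ ≤ _ := Submodule.rank_mono hle
    _ ≤ _ := rank_span_finset_le _
    _ ≤ n := by exact_mod_cast Finset.card_image_le.trans (Finset.card_range n).le

theorem approxNumber_succ_le_of_diagonal (hpq : p ≤ q) {σ : ℕ → ℂ} {D : ℓ[p] →L[ℂ] ℓ[q]}
    (hD : ∀ x m, D x m = σ m * x m) (n : ℕ) {t : ℝ} (ht : ∀ m, n ≤ m → ‖σ m‖ ≤ t) :
    approxNumber (n + 1) D ≤ t := by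
  have hrank : Module.rank ℂ (LinearMap.range ((D.comp (truncation p n) : ℓ[p] →L[ℂ] ℓ[q]) :
      ℓ[p] →ₗ[ℂ] ℓ[q])) < (n + 1 : ℕ) :=
    calc _ ≤ _ := LinearMap.rank_comp_le_right _ _
      _ ≤ n := rank_range_truncation_le p n
      _ < (n + 1 : ℕ) := by exact_mod_cast n.lt_succ_self
  have ht0 : 0 ≤ t := (norm_nonneg _).trans (ht n le_rfl)
  refine (approxNumber_le_norm_sub _ hrank).trans
    (ContinuousLinearMap.opNorm_le_bound _ ht0 fun x => ?_)
  refine lp.norm_le_mul_norm_of_exponent_le (zero_lt_one.trans_le Fact.out).ne' hpq ht0 fun m => ?_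
  rw [_root_.sub_apply, ContinuousLinearMap.comp_apply, ← map_sub, hD, lp.coeFn_sub, Pi.sub_apply,
    truncation_apply, lp.coeFn_sum_single, norm_mul]
  dsimp only
  split_ifs with hm
  · rw [sub_self, norm_zero, mul_zero]; positivity
  · rw [sub_zero]
    exact mul_le_mul_of_nonneg_right (ht m (by simpa using hm)) (norm_nonneg _)

theorem sum_norm_sq_apply_single_le_of_le_two (hq : q ≤ 2) (T : ℓ[p] →L[ℂ] ℓ[q]) (j : ℕ)
    (s : Finset ℕ) : ∑ i ∈ s, ‖T (lp.single p j 1) i‖ ^ 2 ≤ ‖T‖ ^ 2 := by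
  refine (lp.sum_norm_sq_le_norm_sq (zero_lt_one.trans_le Fact.out).ne' hq _ s).trans ?_
  refine pow_le_pow_left₀ (norm_nonneg _) ?_ 2
  simpa [lp.norm_single (zero_lt_one.trans_le Fact.out)] using T.le_opNorm (lp.single p j 1)

theorem sum_norm_sq_apply_single_le_of_two_le (hp : 2 ≤ p) (T : ℓ[p] →L[ℂ] ℓ[q]) (i : ℕ)
    (s : Finset ℕ) : ∑ j ∈ s, ‖T (lp.single p j 1) i‖ ^ 2 ≤ ‖T‖ ^ 2 := by
  set a : ℕ → ℂ := fun j => T (lp.single p j 1) i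
  set S := ∑ j ∈ s, ‖a j‖ ^ 2
  -- test `T` against the conjugate of its `i`-th row
  set x : ℓ[p] := ∑ j ∈ s, lp.single p j (conj (a j))
  have hTx : T x i = S := by
    simp only [x, S, map_sum, lp.coeFn_sum, Finset.sum_apply]
    push_cast
    refine Finset.sum_congr rfl fun j _ => ?_
    rw [← mul_one (conj (a j)), ← smul_eq_mul, lp.single_smul, map_smul, lp.coeFn_smul,
      Pi.smul_apply, smul_eq_mul]
    exact RCLike.conj_mul (a j)
  have hx : ‖x‖ ^ 2 ≤ S := by
    simpa [x, S] using lp.norm_sum_single_sq_le hp (fun j => conj (a j)) s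
  have hS : S ≤ ‖T‖ * ‖x‖ :=
    calc S = ‖T x i‖ := by rw [hTx, Complex.norm_real, norm_of_nonneg (by positivity)]
      _ ≤ ‖T x‖ := lp.norm_apply_le_norm (zero_lt_one.trans_le Fact.out).ne' _ i
      _ ≤ ‖T‖ * ‖x‖ := T.le_opNorm x
  nlinarith [norm_nonneg T, norm_nonneg x]

noncomputable def leadingBlock (T : ℓ[p] →L[ℂ] ℓ[q]) (n : ℕ) : Matrix (Fin n) (Fin n) ℂ :=
  Matrix.of fun i j => T (lp.single p j 1) i

theorem rank_leadingBlock_le (A : ℓ[p] →L[ℂ] ℓ[q]) (n : ℕ) :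
    ((leadingBlock A n).rank : Cardinal) ≤
      Module.rank ℂ (LinearMap.range (A : ℓ[p] →ₗ[ℂ] ℓ[q])) := by
  set restrict : ℓ[q] →ₗ[ℂ] Fin n → ℂ :=
    LinearMap.pi fun i => lp.evalₗ (𝕜 := ℂ) (fun _ : ℕ => ℂ) q (i : ℕ)
  have hle : Submodule.span ℂ (Set.range (leadingBlock A n).col) ≤
      (LinearMap.range (A : ℓ[p] →ₗ[ℂ] ℓ[q])).map restrict := by
    rw [Submodule.span_le]
    rintro _ ⟨j, rfl⟩
    exact Submodule.mem_map_of_mem ⟨lp.single p j 1, rfl⟩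
  rw [Matrix.rank_eq_finrank_span_cols, Module.finrank_eq_rank]
  exact (Submodule.rank_mono hle).trans (rank_map_le _ _)

theorem sum_sum_norm_sq_leadingBlock_le (hpq : q ≤ 2 ∨ 2 ≤ p) (T : ℓ[p] →L[ℂ] ℓ[q]) (n : ℕ) :
    ∑ i, ∑ j, ‖leadingBlock T n i j‖ ^ 2 ≤ n * ‖T‖ ^ 2 := by
  rcases hpq with hq | hp
  · rw [Finset.sum_comm]
    calc _ ≤ ∑ _j : Fin n, ‖T‖ ^ 2 := Finset.sum_le_sum fun j _ => by
          simpa only [leadingBlock, Matrix.of_apply,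
            Fin.sum_univ_eq_sum_range (fun i => ‖T (lp.single p j 1) i‖ ^ 2)]
            using sum_norm_sq_apply_single_le_of_le_two hq T j (Finset.range n)
      _ = _ := by simp
  · calc _ ≤ ∑ _i : Fin n, ‖T‖ ^ 2 := Finset.sum_le_sum fun i _ => by
          simpa only [leadingBlock, Matrix.of_apply,
            Fin.sum_univ_eq_sum_range (fun j => ‖T (lp.single p j 1) i‖ ^ 2)]
            using sum_norm_sq_apply_single_le_of_two_le hp T i (Finset.range n)
      _ = _ := by simp

theorem le_approxNumber_of_diagonal (hpq : q ≤ 2 ∨ 2 ≤ p) {σ : ℕ → ℂ} {D : ℓ[p] →L[ℂ] ℓ[q]}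
    (hD : ∀ x m, D x m = σ m * x m) {k : ℕ} (hk : k ≠ 0) {c : ℝ} (hc : 0 ≤ c)
    (hσ : ∀ m < 2 * k, c ≤ ‖σ m‖) : c / 2 ≤ approxNumber k D := by
  refine le_approxNumber hk fun A hA => ?_
  have hsec : leadingBlock (D - A) (2 * k) =
      Matrix.diagonal (fun j : Fin (2 * k) => σ j) - leadingBlock A (2 * k) := by
    ext i j
    rcases eq_or_ne i j with rfl | h
    · simp [leadingBlock, hD]
    · simp [leadingBlock, hD, h, Fin.val_ne_of_ne h]
  have hrank : (leadingBlock A (2 * k)).rank < k := by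
    exact_mod_cast (rank_leadingBlock_le A _).trans_lt hA
  have hrank' : ((leadingBlock A (2 * k)).rank : ℝ) + 1 ≤ k := by exact_mod_cast hrank
  have hfrob_ge := Matrix.card_sub_rank_mul_le_sum_norm_sq (fun j : Fin (2 * k) => σ j) (c := c ^ 2)
    (fun j => pow_le_pow_left₀ hc (hσ j j.2) 2) (leadingBlock A (2 * k))
  rw [← hsec, Fintype.card_fin] at hfrob_ge
  have hfrob_le := sum_sum_norm_sq_leadingBlock_le hpq (D - A) (2 * k)
  push_cast at hfrob_ge hfrob_le
  have hk' : (0 : ℝ) < k := by exact_mod_cast Nat.pos_of_ne_zero hk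
  have h : c ^ 2 ≤ 2 * ‖D - A‖ ^ 2 :=
    le_of_mul_le_mul_left (by nlinarith : (k : ℝ) * c ^ 2 ≤ k * (2 * ‖D - A‖ ^ 2)) hk'
  nlinarith [norm_nonneg (D - A)]

end DiagonalOperator

noncomputable def powLog (α β x : ℝ) : ℝ := x ^ (-α) * logb 2 x ^ β

section PowLog

variable {α β : ℝ}

theorem powLog_pos {x : ℝ} (hx : 1 < x) : 0 < powLog α β x :=
  mul_pos (rpow_pos_of_pos (by linarith) _) (rpow_pos_of_pos (logb_pos one_lt_two hx) _)

theorem one_add_logb_le_mul_rpow {ε t : ℝ} (hε : 0 < ε) (ht : 1 ≤ t) :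
    1 + logb 2 t ≤ (1 + (ε * log 2)⁻¹) * t ^ ε := by
  have hlogb : logb 2 t ≤ (ε * log 2)⁻¹ * t ^ ε :=
    calc logb 2 t = log t / log 2 := rfl
      _ ≤ t ^ ε / ε / log 2 :=
        div_le_div_of_nonneg_right (log_le_rpow_div (by linarith) hε) (log_nonneg one_le_two)
      _ = (ε * log 2)⁻¹ * t ^ ε := by ring
  have : 1 ≤ t ^ ε := one_le_rpow ht hε.le
  linarith

theorem logb_le_logb_mul_one_add_logb_div {x y : ℝ} (hx : 2 ≤ x) (hxy : x ≤ y) :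
    logb 2 y ≤ logb 2 x * (1 + logb 2 (y / x)) := by
  have hx0 : 0 < x := by linarith
  have h1 : 1 ≤ logb 2 x := (le_logb_iff_rpow_le one_lt_two hx0).2 (by simpa using hx)
  have h2 : 0 ≤ logb 2 (y / x) := logb_nonneg one_lt_two ((one_le_div hx0).2 hxy)
  rw [logb_div (by linarith) hx0.ne'] at h2 ⊢
  nlinarith

theorem exists_powLog_le_mul_powLog (hα : 0 < α) (hβ : 0 ≤ β) :
    ∃ C, 1 ≤ C ∧ ∀ x y, 2 ≤ x → x ≤ y → powLog α β y ≤ C * powLog α β x := by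
  set ε := α / (β + 1)
  have hε : 0 < ε := by positivity
  set K := 1 + (ε * log 2)⁻¹
  have hK : 1 ≤ K := le_add_of_nonneg_right (by positivity)
  refine ⟨K ^ β, one_le_rpow hK hβ, fun x y hx hxy => ?_⟩
  have hx0 : 0 < x := by linarith
  set t := y / x
  have ht : 1 ≤ t := (one_le_div hx0).2 hxy
  have hy : y = x * t := (mul_div_cancel₀ y hx0.ne').symm
  have hlogb : logb 2 y ≤ logb 2 x * (K * t ^ ε) :=
    (logb_le_logb_mul_one_add_logb_div hx hxy).trans
      (mul_le_mul_of_nonneg_left (one_add_logb_le_mul_rpow hε ht)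
        (logb_nonneg one_lt_two (by linarith)))
  -- `ε β ≤ α` is what lets the power of `t` be absorbed by `t ^ (-α)`
  have htpow : (t ^ ε) ^ β ≤ t ^ α := by
    rw [← rpow_mul (by linarith)]
    exact rpow_le_rpow_of_exponent_le ht (by
      rw [div_mul_eq_mul_div, div_le_iff₀ (by linarith)]; nlinarith)
  calc powLog α β y = x ^ (-α) * t ^ (-α) * logb 2 y ^ β := by
        rw [powLog, hy, mul_rpow hx0.le (by linarith)]
    _ ≤ x ^ (-α) * t ^ (-α) * (logb 2 x ^ β * (K ^ β * t ^ α)) := by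
        have hlogx : 0 ≤ logb 2 x := logb_nonneg one_lt_two (by linarith)
        gcongr
        calc logb 2 y ^ β ≤ (logb 2 x * (K * t ^ ε)) ^ β :=
              rpow_le_rpow (logb_nonneg one_lt_two (by linarith)) hlogb hβ
          _ = logb 2 x ^ β * (K ^ β * (t ^ ε) ^ β) := by
              rw [mul_rpow hlogx (by positivity), mul_rpow (by positivity) (by positivity)]
          _ ≤ _ := by gcongr
    _ = K ^ β * powLog α β x * (t ^ (-α) * t ^ α) := by rw [powLog]; ring
    _ = K ^ β * powLog α β x := by rw [← rpow_add (by linarith)]; simp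

theorem mul_powLog_le_powLog_of_le_two_mul (hα : 0 ≤ α) (hβ : 0 ≤ β) {x y : ℝ} (hx : 1 ≤ x)
    (hxy : x ≤ y) (hy : y ≤ 2 * x) : 2 ^ (-α) * powLog α β x ≤ powLog α β y := by
  have hlogx : 0 ≤ logb 2 x := logb_nonneg one_lt_two hx
  calc 2 ^ (-α) * powLog α β x = (2 * x) ^ (-α) * logb 2 x ^ β := by
        rw [powLog, mul_rpow zero_le_two (by linarith)]; ring
    _ ≤ y ^ (-α) * logb 2 y ^ β :=
        mul_le_mul (rpow_le_rpow_of_nonpos (by linarith) hy (by linarith))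
          (rpow_le_rpow hlogx (logb_le_logb_of_le one_lt_two (by linarith) hxy) hβ)
          (by positivity) (rpow_nonneg (by linarith) _)

theorem diagSeq_one (hα : 0 < α) (hβ : 0 ≤ β) : diagSeq α β 1 = 1 := by
  unfold diagSeq
  split_ifs with h
  · obtain rfl : β = 0 := by
      by_contra hβ0
      have : 1 < (2 : ℝ) ^ (β / α) := one_lt_rpow one_lt_two (by positivity)
      push_cast at h
      linarith
    simp
  · rfl

theorem exists_diagSeq_le_mul_powLog (hα : 0 < α) (hβ : 0 ≤ β) :
    ∃ C, 0 < C ∧ ∀ k m : ℕ, 2 ≤ k → k ≤ m → diagSeq α β m ≤ C * powLog α β k := by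
  obtain ⟨C, hC, hCpow⟩ := exists_powLog_le_mul_powLog hα hβ
  refine ⟨max C (2 ^ β), by positivity, fun k m hk hkm => ?_⟩
  have hk2 : (2 : ℝ) ≤ k := by exact_mod_cast hk
  have hkm' : (k : ℝ) ≤ m := by exact_mod_cast hkm
  have hpow : 0 ≤ powLog α β k := (powLog_pos (by linarith)).le
  unfold diagSeq
  split_ifs with h
  · calc (m : ℝ) ^ (-α) * logb 2 m ^ β ≤ C * powLog α β k := hCpow _ _ hk2 hkm'
      _ ≤ _ := by gcongr; exact le_max_left _ _
  · -- below the threshold `2 ^ (β / α)` the factor `k ^ (-α)` alone exceeds `2 ^ (-β)`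
    have hkα : (k : ℝ) ^ α ≤ 2 ^ β := by
      calc (k : ℝ) ^ α ≤ ((2 : ℝ) ^ (β / α)) ^ α := by gcongr; linarith [not_le.1 h]
        _ = 2 ^ β := by rw [← rpow_mul zero_le_two, div_mul_cancel₀ _ hα.ne']
    have hlog : 1 ≤ logb 2 (k : ℝ) ^ β :=
      one_le_rpow ((le_logb_iff_rpow_le one_lt_two (by linarith)).2 (by simpa using hk2)) hβ
    calc (1 : ℝ) ≤ 2 ^ β * (k : ℝ) ^ (-α) := by
          rw [rpow_neg (by linarith), ← div_eq_mul_inv, one_le_div (by positivity)]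
          exact hkα
      _ ≤ 2 ^ β * powLog α β k := by
          rw [powLog]; gcongr; exact le_mul_of_one_le_right (by positivity) hlog
      _ ≤ _ := by gcongr; exact le_max_right _ _

theorem exists_mul_powLog_le_diagSeq (hα : 0 < α) (hβ : 0 ≤ β) :
    ∃ c, 0 < c ∧ ∀ k m : ℕ, 2 ≤ k → 1 ≤ m → m ≤ 2 * k → c * powLog α β k ≤ diagSeq α β m := by
  obtain ⟨C, hC, hCpow⟩ := exists_powLog_le_mul_powLog hα hβ
  have hC0 : 0 < C := by linarith
  have h2α : (2 : ℝ) ^ (-α) ≤ 1 := rpow_le_one_of_one_le_of_nonpos one_le_two (by linarith)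
  refine ⟨C⁻¹ * 2 ^ (-α), by positivity, fun k m hk hm hmk => ?_⟩
  have hk2 : (2 : ℝ) ≤ k := by exact_mod_cast hk
  have hpow : 0 ≤ powLog α β k := (powLog_pos (by linarith)).le
  have hle_one : C⁻¹ * 2 ^ (-α) * powLog α β k ≤ 1 := by
    have h2 : powLog α β k ≤ C := by
      calc powLog α β k ≤ C * powLog α β 2 := hCpow _ _ le_rfl hk2
        _ = C * 2 ^ (-α) := by simp [powLog]
        _ ≤ C := mul_le_of_le_one_right hC0.le h2α
    calc C⁻¹ * 2 ^ (-α) * powLog α β k ≤ C⁻¹ * 1 * C := by gcongr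
      _ = 1 := by field_simp
  have hle_powLog : 2 ≤ m → C⁻¹ * 2 ^ (-α) * powLog α β k ≤ powLog α β m := by
    intro hm2
    have hm2' : (2 : ℝ) ≤ m := by exact_mod_cast hm2
    rcases le_total m k with hmk' | hkm
    · calc C⁻¹ * 2 ^ (-α) * powLog α β k ≤ C⁻¹ * 1 * (C * powLog α β m) := by
            gcongr; exact hCpow _ _ hm2' (by exact_mod_cast hmk')
        _ = powLog α β m := by field_simp
    · calc C⁻¹ * 2 ^ (-α) * powLog α β k = C⁻¹ * (2 ^ (-α) * powLog α β k) := by ring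
        _ ≤ 1 * powLog α β m := by
            gcongr
            · exact inv_le_one_of_one_le₀ hC
            · exact mul_powLog_le_powLog_of_le_two_mul hα.le hβ (by linarith)
                (by exact_mod_cast hkm) (by exact_mod_cast hmk)
        _ = powLog α β m := one_mul _
  obtain rfl | hm2 : m = 1 ∨ 2 ≤ m := by omega
  · rw [diagSeq_one hα hβ]; exact hle_one
  · unfold diagSeq
    split_ifs
    · exact hle_powLog hm2
    · exact hle_one

theorem diagSeq_nonneg (m : ℕ) : 0 ≤ diagSeq α β m := by
  unfold diagSeq
  split_ifs
  · exact mul_nonneg (rpow_nonneg m.cast_nonneg _)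
      (rpow_nonneg (div_nonneg (log_natCast_nonneg m) (log_nonneg one_le_two)) _)
  · exact zero_le_one

end PowLog

theorem statement0_general (p1 p2 : ℝ≥0∞) [Fact (1 ≤ p1)] [Fact (1 ≤ p2)]
    (hcase : (1 ≤ p1 ∧ p1 ≤ p2 ∧ p2 ≤ 2) ∨ (2 ≤ p1 ∧ p1 ≤ p2 ∧ p2 ≤ ∞))
    (α β : ℝ) (hα : 0 < α) (hβ : 0 ≤ β)
    (D : lp (fun _ : ℕ => ℂ) p1 →L[ℂ] lp (fun _ : ℕ => ℂ) p2)
    (hD : ∀ (x : lp (fun _ : ℕ => ℂ) p1) (k : ℕ), D x k = (diagSeq α β (k + 1) : ℂ) * x k) :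
    ∃ c1 c2 : ℝ, 0 < c1 ∧ 0 < c2 ∧ ∀ k : ℕ, 1 < k →
      c1 * ((k : ℝ) ^ (-α) * Real.logb 2 k ^ β) ≤ approxNumber k D ∧
      approxNumber k D ≤ c2 * ((k : ℝ) ^ (-α) * Real.logb 2 k ^ β) := by
  obtain ⟨C, hC, hup⟩ := exists_diagSeq_le_mul_powLog hα hβ
  obtain ⟨c, hc, hlow⟩ := exists_mul_powLog_le_diagSeq hα hβ
  have hpq : p1 ≤ p2 := by rcases hcase with h | h <;> exact h.2.1
  have hexp : p2 ≤ 2 ∨ 2 ≤ p1 := hcase.imp (·.2.2) (·.1)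
  refine ⟨c / 2, C, by positivity, hC, fun k hk => ⟨?_, ?_⟩⟩
  · have hpow : 0 < powLog α β k := powLog_pos (by exact_mod_cast hk)
    have := le_approxNumber_of_diagonal hexp (σ := fun m => (diagSeq α β (m + 1) : ℂ)) hD
      (k := k) (by omega) (c := c * powLog α β k) (by positivity) fun m hm => by
        rw [Complex.norm_real]
        exact (hlow k (m + 1) hk (by omega) (by omega)).trans (le_abs_self _)
    rw [powLog] at this
    linarith
  · obtain ⟨n, rfl⟩ : ∃ n, k = n + 1 := ⟨k - 1, by omega⟩
    refine approxNumber_succ_le_of_diagonal hpq (σ := fun m => (diagSeq α β (m + 1) : ℂ)) hD n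
      fun m hm => ?_
    rw [Complex.norm_real, Real.norm_of_nonneg (diagSeq_nonneg _)]
    exact hup _ _ hk (by omega)

theorem statement0 (p1 p2 : ℝ≥0∞) [Fact (1 ≤ p1)] [Fact (1 ≤ p2)]
    (hcase : (1 ≤ p1 ∧ p1 ≤ p2 ∧ p2 ≤ 2) ∨ (2 ≤ p1 ∧ p1 ≤ p2 ∧ p2 ≤ ∞))
    (hne : ¬(p1 = 1 ∧ p2 = ∞))
    (α β : ℝ) (hα : 0 < α) (hβ : 0 ≤ β)
    (D : lp (fun _ : ℕ => ℂ) p1 →L[ℂ] lp (fun _ : ℕ => ℂ) p2)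
    (hD : ∀ (x : lp (fun _ : ℕ => ℂ) p1) (k : ℕ), D x k = (diagSeq α β (k + 1) : ℂ) * x k) :
    ∃ c1 c2 : ℝ, 0 < c1 ∧ 0 < c2 ∧ ∀ k : ℕ, 1 < k →
      c1 * ((k : ℝ) ^ (-α) * Real.logb 2 k ^ β) ≤ approxNumber k D ∧
      approxNumber k D ≤ c2 * ((k : ℝ) ^ (-α) * Real.logb 2 k ^ β) :=
  statement0_general p1 p2 hcase α β hα hβ D hD
end

section
/- Let 1 ≤ p2 < p1 ≤ ∞ and N ∈ ℕ. Then for every k = 1, …, N one has the exact formula a_k(id : ℓ_{p1}^N → ℓ_{p2}^N) = (N − k + 1)^{1/p2 − 1/p1}. -/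
/-!
The upper bound comes from the coordinate projection onto `k - 1` coordinates: what it leaves
is supported on `m = N - k + 1` coordinates, where Hölder's inequality gives
`‖x‖_{p₂} ≤ m^{1/p₂ - 1/p₁} ‖x‖_{p₁}`.

For the lower bound, the kernel of an operator of rank `< k` has dimension `≥ m`. Moving a
vector of the kernel along kernel directions that vanish on its coordinates of modulus one, until
a new coordinate reaches modulus one, produces `x` in the kernel with `‖x‖_∞ ≤ 1` and at least
`m` coordinates of modulus one. For such `x`, with `S = ∑ |xᵢ|^{p₂} ≥ m`, we have
`‖x‖_{p₁} ≤ S^{1/p₁}`, hence `m^{1/p₂ - 1/p₁} ‖x‖_{p₁} ≤ S^{1/p₂} = ‖x‖_{p₂}`.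
-/

open scoped ENNReal NNReal

/-- The identity map `ℓ_p^N → ℓ_q^N` as a continuous linear map. -/
noncomputable def idCLM (p q : ℝ≥0∞) [Fact (1 ≤ p)] [Fact (1 ≤ q)] (N : ℕ) :
    PiLp p (fun _ : Fin N => ℂ) →L[ℂ] PiLp q (fun _ : Fin N => ℂ) :=
  LinearMap.toContinuousLinearMap
    ((WithLp.linearEquiv q ℂ (∀ _ : Fin N, ℂ)).symm.toLinearMap ∘ₗ
      (WithLp.linearEquiv p ℂ (∀ _ : Fin N, ℂ)).toLinearMap)

open Module WithLp Filter Topology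

local notation "ℓ[" p ", " N "]" => PiLp p (fun _ : Fin N => ℂ)

namespace PiLp

variable {ι : Type*} [Fintype ι] {β : ι → Type*} [∀ i, SeminormedAddCommGroup (β i)]
  {p q : ℝ≥0∞} [Fact (1 ≤ p)] [Fact (1 ≤ q)]

theorem sum_norm_rpow_le_card_rpow_mul_norm_rpow (hq : q ≠ ∞) (hqp : q ≤ p)
    (s : Finset ι) (f : ∀ i, β i) :
    ∑ i ∈ s, ‖f i‖ ^ q.toReal ≤
      (s.card : ℝ) ^ (1 - p⁻¹.toReal * q.toReal) * ‖toLp p f‖ ^ q.toReal := by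
  rcases eq_or_ne p ∞ with rfl | hp
  · calc ∑ i ∈ s, ‖f i‖ ^ q.toReal ≤ ∑ _i ∈ s, ‖toLp ∞ f‖ ^ q.toReal := by
          gcongr with i
          exact norm_apply_le (toLp ∞ f) i
      _ = _ := by simp
  · have hQ : 0 < q.toReal := q.toReal_pos_iff_ne_top.mpr hq
    have hQP : q.toReal ≤ p.toReal := ENNReal.toReal_mono hp hqp
    have hP : 0 < p.toReal := hQ.trans_le hQP
    have holder := Real.inner_le_weight_mul_Lp_of_nonneg s ((one_le_div hQ).2 hQP)
      (fun _ => (1 : ℝ)) (fun i => ‖f i‖ ^ q.toReal) (fun _ => zero_le_one)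
      (fun i => by positivity)
    simp only [one_mul, Finset.sum_const, nsmul_eq_mul, mul_one, ← Real.rpow_mul (norm_nonneg _),
      mul_div_cancel₀ _ hQ.ne', inv_div] at holder
    have hsum : ∑ i ∈ s, ‖f i‖ ^ p.toReal ≤ ‖toLp p f‖ ^ p.toReal := by
      rw [norm_eq_sum hP, ← Real.rpow_mul (by positivity), one_div_mul_cancel hP.ne',
        Real.rpow_one]
      exact Finset.sum_le_sum_of_subset_of_nonneg s.subset_univ fun i _ _ => by positivity
    rw [ENNReal.toReal_inv, inv_mul_eq_div]
    calc _ ≤ _ := holder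
      _ ≤ (s.card : ℝ) ^ (1 - q.toReal / p.toReal) *
            (‖toLp p f‖ ^ p.toReal) ^ (q.toReal / p.toReal) := by gcongr
      _ = _ := by rw [← Real.rpow_mul (norm_nonneg _), mul_div_cancel₀ _ hP.ne']

theorem norm_rpow_eq_sum (hp : p ≠ ∞) (f : PiLp p β) :
    ‖f‖ ^ p.toReal = ∑ i, ‖f i‖ ^ p.toReal := by
  have hP : 0 < p.toReal := p.toReal_pos_iff_ne_top.mpr hp
  rw [norm_eq_sum hP, ← Real.rpow_mul (by positivity), one_div_mul_cancel hP.ne', Real.rpow_one]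

theorem norm_toLp_ite_le [DecidableEq ι] (hq : q ≠ ∞) (hqp : q ≤ p) (s : Finset ι)
    (f : ∀ i, β i) :
    ‖toLp q (fun i => if i ∈ s then f i else 0)‖ ≤
      (s.card : ℝ) ^ (q⁻¹.toReal - p⁻¹.toReal) * ‖toLp p f‖ := by
  have hQ : 0 < q.toReal := q.toReal_pos_iff_ne_top.mpr hq
  rw [← Real.rpow_le_rpow_iff (norm_nonneg _) (by positivity) hQ, norm_rpow_eq_sum hq,
    Real.mul_rpow (by positivity) (norm_nonneg _), ← Real.rpow_mul (by positivity),
    ENNReal.toReal_inv, sub_mul, inv_mul_cancel₀ hQ.ne']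
  convert sum_norm_rpow_le_card_rpow_mul_norm_rpow hq hqp s f using 1
  simp [apply_ite (‖·‖ ^ q.toReal), Real.zero_rpow hQ.ne', Finset.sum_ite_mem]

theorem norm_toLp_le_sum_rpow_of_norm_le_one (hq : q ≠ ∞) (hqp : q ≤ p) {f : ∀ i, β i}
    (hf : ∀ i, ‖f i‖ ≤ 1) :
    ‖toLp p f‖ ≤ (∑ i, ‖f i‖ ^ q.toReal) ^ p⁻¹.toReal := by
  rcases eq_or_ne p ∞ with rfl | hp
  · rw [← norm_ofLp, ENNReal.inv_top, ENNReal.toReal_zero, Real.rpow_zero]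
    exact pi_norm_le_iff_of_nonneg zero_le_one |>.2 hf
  · have hQ : 0 < q.toReal := q.toReal_pos_iff_ne_top.mpr hq
    have hP : 0 < p.toReal := hQ.trans_le (ENNReal.toReal_mono hp hqp)
    rw [norm_eq_sum hP, ENNReal.toReal_inv, ← one_div]
    refine Real.rpow_le_rpow (by positivity) (Finset.sum_le_sum fun i _ => ?_) (by positivity)
    exact Real.rpow_le_rpow_of_exponent_ge' (norm_nonneg _) (hf i) hQ.le
      (ENNReal.toReal_mono hp hqp)

theorem card_rpow_mul_norm_toLp_le (hq : q ≠ ∞) (hqp : q ≤ p) {f : ∀ i, β i}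
    (hf : ∀ i, ‖f i‖ ≤ 1) {s : Finset ι} (hs : s.Nonempty) (hfs : ∀ i ∈ s, ‖f i‖ = 1) :
    (s.card : ℝ) ^ (q⁻¹.toReal - p⁻¹.toReal) * ‖toLp p f‖ ≤ ‖toLp q f‖ := by
  have hQ : 0 < q.toReal := q.toReal_pos_iff_ne_top.mpr hq
  set S := ∑ i, ‖f i‖ ^ q.toReal
  have hcard : (s.card : ℝ) ≤ S := by
    calc (s.card : ℝ) = ∑ i ∈ s, (1 : ℝ) := by simp
      _ = ∑ i ∈ s, ‖f i‖ ^ q.toReal :=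
          Finset.sum_congr rfl fun i hi => by rw [hfs i hi, Real.one_rpow]
      _ ≤ S := Finset.sum_le_sum_of_subset_of_nonneg s.subset_univ fun i _ _ => by positivity
  have hS : 0 < S := lt_of_lt_of_le (by exact_mod_cast hs.card_pos) hcard
  have hr : 0 ≤ q⁻¹.toReal - p⁻¹.toReal :=
    sub_nonneg.2 (ENNReal.toReal_mono (ENNReal.inv_ne_top.2 (zero_lt_one.trans_le Fact.out).ne')
      (ENNReal.inv_le_inv.2 hqp))
  calc (s.card : ℝ) ^ (q⁻¹.toReal - p⁻¹.toReal) * ‖toLp p f‖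
      ≤ S ^ (q⁻¹.toReal - p⁻¹.toReal) * S ^ p⁻¹.toReal := by
        gcongr
        exact norm_toLp_le_sum_rpow_of_norm_le_one hq hqp hf
    _ = ‖toLp q f‖ := by
        rw [← Real.rpow_add hS, sub_add_cancel, norm_eq_sum hQ, ENNReal.toReal_inv, one_div]

end PiLp

theorem Submodule.exists_mem_ne_zero_forall_mem_eq_zero {K ι : Type*} [Field K] [Finite ι]
    (E : Submodule K (ι → K)) (s : Finset ι) (hs : s.card < finrank K E) :
    ∃ y ∈ E, y ≠ 0 ∧ ∀ i ∈ s, y i = 0 := by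
  let restrict : E →ₗ[K] (s → K) := LinearMap.funLeft K K ((↑) : s → ι) ∘ₗ E.subtype
  have hker : LinearMap.ker restrict ≠ ⊥ :=
    LinearMap.ker_ne_bot_of_finrank_lt (by simpa using hs)
  obtain ⟨y, hy, hy0⟩ := Submodule.exists_mem_ne_zero_of_ne_bot hker
  refine ⟨y, y.2, by simpa using hy0, fun i hi => ?_⟩
  simpa [restrict] using congr_fun (LinearMap.mem_ker.1 hy) ⟨i, hi⟩

theorem exists_forall_norm_add_mul_le_one_and_eq_one {ι 𝕜 : Type*} [Finite ι] [RCLike 𝕜]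
    {x y : ι → 𝕜} (hx : ∀ i, ‖x i‖ ≤ 1) (hy : y ≠ 0) :
    ∃ t : 𝕜, (∀ i, ‖x i + t * y i‖ ≤ 1) ∧ ∃ i, y i ≠ 0 ∧ ‖x i + t * y i‖ = 1 := by
  obtain ⟨j, hj⟩ := Function.ne_iff.1 hy
  let T : Set ℝ := {t | 0 ≤ t ∧ ∀ i, ‖x i + t * y i‖ ≤ 1}
  have hT_sub : T ⊆ Set.Icc 0 (2 / ‖y j‖) := fun t ⟨ht, hti⟩ => by
    refine ⟨ht, (le_div_iff₀ (norm_pos_iff.2 hj)).2 ?_⟩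
    calc t * ‖y j‖ = ‖x j + t * y j - x j‖ := by simp [abs_of_nonneg ht]
      _ ≤ ‖x j + t * y j‖ + ‖x j‖ := norm_sub_le _ _
      _ ≤ 2 := by linarith [hti j, hx j]
  have hT_closed : IsClosed T := by
    simp only [T, Set.ofPred_and, Set.ofPred_forall]
    exact (isClosed_le continuous_const continuous_id).inter
      (isClosed_iInter fun i => isClosed_le (by fun_prop) continuous_const)
  obtain ⟨t₀, ⟨ht₀, ht₀1⟩, ht₀max⟩ :=
    (isCompact_Icc.of_isClosed_subset hT_closed hT_sub).exists_isGreatest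
      ⟨0, le_rfl, by simpa using hx⟩
  refine ⟨t₀, ht₀1, ?_⟩
  by_contra! hlt
  -- if no moving coordinate has reached the unit circle, `t₀` can be pushed further
  have hnear : ∀ᶠ t : ℝ in 𝓝 t₀, ∀ i, y i ≠ 0 → ‖x i + t * y i‖ < 1 :=
    eventually_all.2 fun i => by
      by_cases hyi : y i = 0
      · exact Eventually.of_forall fun _ h => absurd hyi h
      · have hcont : Continuous fun t : ℝ => ‖x i + t * y i‖ := by fun_prop
        exact (hcont.continuousAt.eventually_lt continuousAt_const
          ((ht₀1 i).lt_of_ne (hlt i hyi))).mono fun _ h _ => h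
  obtain ⟨t, ht, ht₀t⟩ := ((hnear.filter_mono nhdsWithin_le_nhds).and self_mem_nhdsWithin).exists
    (f := 𝓝[>] t₀)
  have htT : t ∈ T := ⟨ht₀.trans ht₀t.le, fun i => by
    by_cases hyi : y i = 0
    · simpa [hyi] using hx i
    · exact (ht i hyi).le⟩
  exact (ht₀max htT).not_gt ht₀t

theorem Submodule.exists_mem_forall_norm_le_one_card_norm_eq_one {ι 𝕜 : Type*} [Finite ι]
    [RCLike 𝕜] (E : Submodule 𝕜 (ι → 𝕜)) {m : ℕ} (hm : m ≤ finrank 𝕜 E) :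
    ∃ x ∈ E, (∀ i, ‖x i‖ ≤ 1) ∧ ∃ s : Finset ι, s.card = m ∧ ∀ i ∈ s, ‖x i‖ = 1 := by
  induction m with
  | zero => exact ⟨0, E.zero_mem, by simp, ∅, rfl, by simp⟩
  | succ m ih =>
    obtain ⟨x, hxE, hx, s, rfl, hxs⟩ := ih (by omega)
    obtain ⟨y, hyE, hy0, hys⟩ := E.exists_mem_ne_zero_forall_mem_eq_zero s (by omega)
    obtain ⟨t, ht, i, hyi, hti⟩ := exists_forall_norm_add_mul_le_one_and_eq_one hx hy0
    have his : i ∉ s := fun h => hyi (hys i h)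
    refine ⟨x + t • y, E.add_mem hxE (E.smul_mem t hyE), ht, s.cons i his, by simp, ?_⟩
    simp only [Finset.mem_cons, forall_eq_or_imp, Pi.add_apply, Pi.smul_apply, smul_eq_mul]
    exact ⟨hti, fun j hj => by simpa [hys j hj] using hxs j hj⟩

theorem approxNumber_eq_of_forall_le {X Y : Type*} [NormedAddCommGroup X] [NormedSpace ℂ X]
    [NormedAddCommGroup Y] [NormedSpace ℂ Y] {k : ℕ} {T : X →L[ℂ] Y} {v : ℝ}
    (hlower : ∀ A : X →L[ℂ] Y,
      Module.rank ℂ (LinearMap.range (A : X →ₗ[ℂ] Y)) < k → v ≤ ‖T - A‖)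
    (hupper : ∃ A : X →L[ℂ] Y,
      Module.rank ℂ (LinearMap.range (A : X →ₗ[ℂ] Y)) < k ∧ ‖T - A‖ ≤ v) :
    approxNumber k T = v := by
  obtain ⟨A, hA, hAv⟩ := hupper
  refine le_antisymm (csInf_le_of_le ⟨v, ?_⟩ ⟨A, hA, rfl⟩ hAv) (le_csInf ⟨_, A, hA, rfl⟩ ?_) <;>
    exact fun c ⟨B, hB, hc⟩ => hc ▸ hlower B hB

-- Factored through `ℂ^F`, so that its rank is visibly at most `#F`.
noncomputable def restrictCLM (p q : ℝ≥0∞) [Fact (1 ≤ p)] [Fact (1 ≤ q)] {N : ℕ}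
    (F : Finset (Fin N)) : ℓ[p, N] →L[ℂ] ℓ[q, N] :=
  LinearMap.toContinuousLinearMap
    (((WithLp.linearEquiv q ℂ (Fin N → ℂ)).symm.toLinearMap ∘ₗ
        Function.ExtendByZero.linearMap ℂ ((↑) : F → Fin N)) ∘ₗ
      LinearMap.funLeft ℂ ℂ ((↑) : F → Fin N) ∘ₗ (WithLp.linearEquiv p ℂ (Fin N → ℂ)).toLinearMap)

section

variable {p q : ℝ≥0∞} [Fact (1 ≤ p)] [Fact (1 ≤ q)] {N : ℕ}

theorem restrictCLM_apply (F : Finset (Fin N)) (x : ℓ[p, N]) :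
    restrictCLM p q F x = toLp q (fun i => if i ∈ F then x i else 0) := by
  ext i
  by_cases hi : i ∈ F
  · simp only [restrictCLM, hi]
    exact Subtype.val_injective.extend_apply _ _ ⟨i, hi⟩
  · simp [restrictCLM, hi]

theorem rank_range_restrictCLM_le (F : Finset (Fin N)) :
    Module.rank ℂ (LinearMap.range (restrictCLM p q F : ℓ[p, N] →ₗ[ℂ] ℓ[q, N])) ≤ F.card :=
  (LinearMap.rank_comp_le_left _ _).trans ((LinearMap.rank_le_domain _).trans (by simp))

theorem idCLM_sub_restrictCLM (F : Finset (Fin N)) :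
    idCLM p q N - restrictCLM p q F = restrictCLM p q Fᶜ := by
  ext x i
  by_cases hi : i ∈ F <;> simp [restrictCLM_apply, idCLM, hi]

theorem norm_restrictCLM_le (hq : q ≠ ∞) (hqp : q ≤ p) (F : Finset (Fin N)) :
    ‖restrictCLM p q F‖ ≤ (F.card : ℝ) ^ (q⁻¹.toReal - p⁻¹.toReal) :=
  ContinuousLinearMap.opNorm_le_bound _ (by positivity) fun x => by
    rw [restrictCLM_apply]
    exact PiLp.norm_toLp_ite_le hq hqp F x

theorem rpow_le_norm_idCLM_sub (hq : q ≠ ∞) (hqp : q ≤ p) {k : ℕ} (hkN : k ≤ N)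
    (A : ℓ[p, N] →L[ℂ] ℓ[q, N])
    (hA : Module.rank ℂ (LinearMap.range
      (A : ℓ[p, N] →ₗ[ℂ] ℓ[q, N])) < k) :
    ((N - k + 1 : ℕ) : ℝ) ^ (q⁻¹.toReal - p⁻¹.toReal) ≤ ‖idCLM p q N - A‖ := by
  let B := (A : ℓ[p, N] →ₗ[ℂ] ℓ[q, N]) ∘ₗ
    (WithLp.linearEquiv p ℂ (Fin N → ℂ)).symm.toLinearMap
  have hB : finrank ℂ (LinearMap.range B) < k := by
    rw [LinearMap.range_comp_of_range_eq_top _ (LinearEquiv.range _)]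
    rw [← finrank_eq_rank] at hA
    exact_mod_cast hA
  have hker : N - k + 1 ≤ finrank ℂ (LinearMap.ker B) := by
    have := B.finrank_range_add_finrank_ker
    rw [finrank_fin_fun] at this
    omega
  obtain ⟨x, hxB, hx, s, hs, hxs⟩ :=
    (LinearMap.ker B).exists_mem_forall_norm_le_one_card_norm_eq_one hker
  obtain ⟨i, hi⟩ : s.Nonempty := Finset.card_pos.1 (by omega)
  have hx0 : 0 < ‖toLp p x‖ := one_pos.trans_le (hxs i hi ▸ PiLp.norm_apply_le (toLp p x) i)
  have hAx : A (toLp p x) = 0 := hxB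
  refine le_of_mul_le_mul_right ?_ hx0
  calc ((N - k + 1 : ℕ) : ℝ) ^ (q⁻¹.toReal - p⁻¹.toReal) * ‖toLp p x‖ ≤ ‖toLp q x‖ := by
        rw [← hs]
        exact PiLp.card_rpow_mul_norm_toLp_le hq hqp hx ⟨i, hi⟩ hxs
    _ = ‖(idCLM p q N - A) (toLp p x)‖ := by
        rw [sub_apply, hAx, sub_zero]
        rfl
    _ ≤ ‖idCLM p q N - A‖ * ‖toLp p x‖ := ContinuousLinearMap.le_opNorm _ _

theorem exists_rank_lt_norm_idCLM_sub_le (hq : q ≠ ∞) (hqp : q ≤ p) {k : ℕ} (hk : 1 ≤ k)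
    (hkN : k ≤ N) :
    ∃ A : ℓ[p, N] →L[ℂ] ℓ[q, N],
      Module.rank ℂ (LinearMap.range
        (A : ℓ[p, N] →ₗ[ℂ] ℓ[q, N])) < k ∧
      ‖idCLM p q N - A‖ ≤ ((N - k + 1 : ℕ) : ℝ) ^ (q⁻¹.toReal - p⁻¹.toReal) := by
  obtain ⟨F, -, hF⟩ := (Finset.univ : Finset (Fin N)).exists_subset_card_eq (n := k - 1)
    (by simp; omega)
  refine ⟨restrictCLM p q F, (rank_range_restrictCLM_le F).trans_lt ?_, ?_⟩
  · rw [hF]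
    exact_mod_cast Nat.sub_one_lt_of_lt hk
  · have hcard : Fᶜ.card = N - k + 1 := by
      rw [Finset.card_compl, hF, Fintype.card_fin]
      omega
    rw [idCLM_sub_restrictCLM, ← hcard]
    exact norm_restrictCLM_le hq hqp Fᶜ

end

theorem statement7_general (p1 p2 : ℝ≥0∞) [Fact (1 ≤ p1)] [Fact (1 ≤ p2)]
    (hp : p2 < p1) (N : ℕ) :
    ∀ k : ℕ, 1 ≤ k → k ≤ N →
      approxNumber k (idCLM p1 p2 N) =
        ((N - k + 1 : ℕ) : ℝ) ^ (p2⁻¹.toReal - p1⁻¹.toReal) := fun _ hk hkN =>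
  approxNumber_eq_of_forall_le (rpow_le_norm_idCLM_sub hp.ne_top hp.le hkN)
    (exists_rank_lt_norm_idCLM_sub_le hp.ne_top hp.le hk hkN)

theorem statement7 (p1 p2 : ℝ≥0∞) [Fact (1 ≤ p1)] [Fact (1 ≤ p2)]
    (hp21 : 1 ≤ p2) (hp : p2 < p1) (N : ℕ) :
    ∀ k : ℕ, 1 ≤ k → k ≤ N →
      approxNumber k (idCLM p1 p2 N) =
        ((N - k + 1 : ℕ) : ℝ) ^ (p2⁻¹.toReal - p1⁻¹.toReal) :=
  statement7_general p1 p2 hp N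
end
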